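/- arXiv:1803.09940 — 9 statements merged into one kernel-verified Lean document; each statement's English description precedes it below -/
import Mathlib

section
/- For an unconditional lower prevision P on D and a gamble Z, the 2-convex natural extension E_{2c}(Z) = sup{α : ∃X ∈ D, sup((X - P(X)) - (Z - α)) < 0} is finite for all gambles Z if and only if P 1-avoids unbounded sure loss (there exists k with sup(X - P(X)) ≥ k for all X ∈ D). -/
/-- The 2-convex natural extension `E_{2c}(Z)` is finite for all gambles `Z`
iff `P` 1-avoids unbounded sure loss. -/
theorem twoConvexNatExt_finite_iff_oneAUSL
    {Ω : Type*} [Nonempty Ω] (D : Set (Ω → ℝ)) (hD : D.Nonempty) (P : (Ω → ℝ) → ℝ)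
    (hbdd : ∀ X ∈ D, BddAbove (Set.range X) ∧ BddBelow (Set.range X)) :
    (∀ Z : Ω → ℝ, BddAbove (Set.range Z) → BddBelow (Set.range Z) →
      ∃ r : ℝ,
        sSup ((fun x : ℝ => (x : EReal)) ''
          {α : ℝ | ∃ X ∈ D, (⨆ ω, ((X ω - P X) - (Z ω - α))) < 0}) = (r : EReal)) ↔
    (∃ k : ℝ, ∀ X ∈ D, k ≤ ⨆ ω, (X ω - P X)) := by
  constructor
  · intro H
    obtain ⟨r, hr⟩ := H (fun _ => 0)
      ⟨0, by rintro x ⟨ω, rfl⟩; exact le_refl 0⟩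
      ⟨0, by rintro x ⟨ω, rfl⟩; exact le_refl 0⟩
    refine ⟨-r - 1, fun X hX => ?_⟩
    set S := ⨆ ω, (X ω - P X) with hS
    have hBdd : BddAbove (Set.range fun ω => X ω - P X) := by
      obtain ⟨b, hb⟩ := (hbdd X hX).1
      refine ⟨b - P X, ?_⟩
      rintro _ ⟨ω, rfl⟩
      exact sub_le_sub_right (hb (Set.mem_range_self ω)) _
    have hmem : (-S - 1) ∈
        {α : ℝ | ∃ X ∈ D, (⨆ ω, ((X ω - P X) - ((fun _ => (0:ℝ)) ω - α))) < 0} := by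
      refine ⟨X, hX, lt_of_le_of_lt (ciSup_le fun ω => ?_) (by norm_num : (-1:ℝ) < 0)⟩
      have := le_ciSup hBdd ω
      simp only
      linarith [this]
    have hle : ((-S - 1 : ℝ) : EReal) ≤ (r : EReal) := by
      rw [← hr]
      exact le_sSup ⟨-S - 1, hmem, rfl⟩
    have : -S - 1 ≤ r := EReal.coe_le_coe_iff.1 hle
    linarith
  · rintro ⟨k, hk⟩ Z hZa hZb
    have hrange : (Set.range Z).Nonempty := Set.range_nonempty _
    set M := sSup (Set.range Z) with hM
    set m := sInf (Set.range Z) with hm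
    set A := {α : ℝ | ∃ X ∈ D, (⨆ ω, ((X ω - P X) - (Z ω - α))) < 0} with hA
    have hne : A.Nonempty := by
      obtain ⟨X, hX⟩ := hD
      have hBdd : BddAbove (Set.range fun ω => X ω - P X) := by
        obtain ⟨b, hb⟩ := (hbdd X hX).1
        refine ⟨b - P X, ?_⟩
        rintro _ ⟨ω, rfl⟩
        exact sub_le_sub_right (hb (Set.mem_range_self ω)) _
      refine ⟨m - (⨆ ω, (X ω - P X)) - 1, X, hX,
        lt_of_le_of_lt (ciSup_le fun ω => ?_) (by norm_num : (-1:ℝ) < 0)⟩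
      have h1 : X ω - P X ≤ ⨆ ω, (X ω - P X) := le_ciSup hBdd ω
      have h2 : m ≤ Z ω := csInf_le hZb (Set.mem_range_self ω)
      linarith
    have hbA : BddAbove A := by
      refine ⟨M - k, fun α hα => ?_⟩
      obtain ⟨X, hX, hs⟩ := hα
      set f := fun ω => (X ω - P X) - (Z ω - α) with hf
      have hbf : BddAbove (Set.range f) := by
        by_contra h
        rw [Real.iSup_of_not_bddAbove h] at hs
        exact absurd hs (lt_irrefl 0)
      have hS : (⨆ ω, (X ω - P X)) ≤ (⨆ ω, f ω) + M - α := by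
        refine ciSup_le fun ω => ?_
        have h1 : f ω ≤ ⨆ ω, f ω := le_ciSup hbf ω
        have h2 : Z ω ≤ M := le_csSup hZa (Set.mem_range_self ω)
        simp only [hf] at h1
        linarith
      have := hk X hX
      linarith
    refine ⟨sSup A, ?_⟩
    exact (Monotone.map_csSup_of_continuousAt
      (continuous_coe_real_ereal.continuousAt)
      (fun a b h => EReal.coe_le_coe_iff.2 h) hne hbA).symm
end

section
/- Let X be a linear space of gambles on Ω containing the constants, P a coherent lower prevision on X (satisfying superadditivity, nonnegative homogeneity, and P(X) - P(Y) ≤ sup(X-Y)), and Z an arbitrary gamble. Then the natural extension of P at Z equals sup{P(Y) : Y ∈ X, Y ≤ Z}. -/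
/-!
Given `α` in the defining set of the natural extension, witnessed by `∑ sᵢ (Xᵢ - P Xᵢ) < Z - α`,
the gamble `Y = ∑ sᵢ Xᵢ - ∑ sᵢ P Xᵢ + α` lies in `V` below `Z`, and superlinearity together with
constant additivity give `α ≤ P Y`. Conversely, a single `Y ≤ Z` in `V` witnesses `P Y - ε` for
every `ε > 0`. The two suprema therefore agree.
-/

open Finset

theorem Real.apply_neg_of_iSup_neg {ι : Sort*} {f : ι → ℝ} (h : ⨆ i, f i < 0) (i : ι) :
    f i < 0 := by
  by_cases hf : BddAbove (Set.range f)
  · exact (le_ciSup hf i).trans_lt h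
  · rw [Real.iSup_of_not_bddAbove hf] at h
    exact absurd h (lt_irrefl 0)

theorem Real.sSup_eq_sSup_of_forall_exists_le_of_forall_sub_mem {s t : Set ℝ}
    (hs : ∀ x ∈ s, ∃ y ∈ t, x ≤ y) (ht : ∀ y ∈ t, ∀ ε > 0, y - ε ∈ s) :
    sSup s = sSup t := by
  rcases t.eq_empty_or_nonempty with rfl | ⟨y₀, hy₀⟩
  · rw [Set.eq_empty_of_forall_notMem (s := s) fun x hx => by simpa using hs x hx]
  have hs_ne : s.Nonempty := ⟨_, ht y₀ hy₀ 1 one_pos⟩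
  by_cases ht_bdd : BddAbove t
  · have hs_le : ∀ x ∈ s, x ≤ sSup t := fun x hx => by
      obtain ⟨y, hy, hxy⟩ := hs x hx
      exact hxy.trans (le_csSup ht_bdd hy)
    refine le_antisymm (csSup_le hs_ne hs_le) (csSup_le ⟨y₀, hy₀⟩ fun y hy => ?_)
    refine le_of_forall_pos_le_add fun ε hε => ?_
    linarith [le_csSup ⟨sSup t, hs_le⟩ (ht y hy ε hε)]
  · have hs_bdd : ¬BddAbove s := fun ⟨b, hb⟩ =>
      ht_bdd ⟨b + 1, fun y hy => by linarith [hb (ht y hy 1 one_pos)]⟩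
    rw [Real.sSup_of_not_bddAbove hs_bdd, Real.sSup_of_not_bddAbove ht_bdd]

namespace LowerPrevision

variable {Ω : Type*} {V : Submodule ℝ (Ω → ℝ)} {P : (Ω → ℝ) → ℝ}

def naturalExtensionSet (V : Submodule ℝ (Ω → ℝ)) (P : (Ω → ℝ) → ℝ) (Z : Ω → ℝ) : Set ℝ :=
  {α : ℝ | ∃ (m : ℕ) (X : Fin m → (Ω → ℝ)) (s : Fin m → ℝ),
    (∀ i, X i ∈ V) ∧ (∀ i, 0 ≤ s i) ∧
    (⨆ ω, (∑ i, s i * (X i ω - P (X i)) - (Z ω - α))) < 0}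

theorem sum_mul_mem {ι : Type*} (t : Finset ι) (s : ι → ℝ) {X : ι → Ω → ℝ}
    (hX : ∀ i, X i ∈ V) : (fun ω => ∑ i ∈ t, s i * X i ω) ∈ V := by
  convert V.sum_mem (t := t) fun i _ => V.smul_mem (s i) (hX i) using 1
  ext ω
  simp [Finset.sum_apply]

theorem map_zero (hA2 : ∀ X ∈ V, ∀ t : ℝ, 0 ≤ t → P (fun ω => t * X ω) = t * P X) :
    P (fun _ : Ω => 0) = 0 := by
  simpa using hA2 0 V.zero_mem 0 le_rfl

theorem map_add_const [Nonempty Ω] (hconst : ∀ c : ℝ, (fun _ : Ω => c) ∈ V)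
    (hA1 : ∀ X ∈ V, ∀ Y ∈ V, P X - P Y ≤ ⨆ ω, (X ω - Y ω)) {X : Ω → ℝ} (hX : X ∈ V)
    (c : ℝ) : P (fun ω => X ω + c) = P X + c := by
  have hXc : (fun ω => X ω + c) ∈ V := V.add_mem hX (hconst c)
  have hup := hA1 _ hXc X hX
  have hdown := hA1 X hX _ hXc
  simp only [add_sub_cancel_left, sub_add_cancel_left, ciSup_const] at hup hdown
  linarith

theorem sum_mul_map_le_map_sum
    (hA2 : ∀ X ∈ V, ∀ t : ℝ, 0 ≤ t → P (fun ω => t * X ω) = t * P X)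
    (hA3 : ∀ X ∈ V, ∀ Y ∈ V, P X + P Y ≤ P (fun ω => X ω + Y ω))
    {ι : Type*} (t : Finset ι) {s : ι → ℝ} (hs : ∀ i, 0 ≤ s i) {X : ι → Ω → ℝ}
    (hX : ∀ i, X i ∈ V) :
    ∑ i ∈ t, s i * P (X i) ≤ P (fun ω => ∑ i ∈ t, s i * X i ω) := by
  classical
  induction t using Finset.induction_on with
  | empty => simp [map_zero hA2]
  | insert j t hj ih =>
    simp only [Finset.sum_insert hj]
    calc s j * P (X j) + ∑ i ∈ t, s i * P (X i)
        ≤ P (fun ω => s j * X j ω) + P (fun ω => ∑ i ∈ t, s i * X i ω) := by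
          rw [hA2 _ (hX j) _ (hs j)]
          exact add_le_add_right ih _
      _ ≤ _ := hA3 _ (V.smul_mem (s j) (hX j)) _ (sum_mul_mem t s hX)

theorem exists_dominated_le_of_mem_naturalExtensionSet [Nonempty Ω]
    (hconst : ∀ c : ℝ, (fun _ : Ω => c) ∈ V)
    (hA1 : ∀ X ∈ V, ∀ Y ∈ V, P X - P Y ≤ ⨆ ω, (X ω - Y ω))
    (hA2 : ∀ X ∈ V, ∀ t : ℝ, 0 ≤ t → P (fun ω => t * X ω) = t * P X)
    (hA3 : ∀ X ∈ V, ∀ Y ∈ V, P X + P Y ≤ P (fun ω => X ω + Y ω))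
    {Z : Ω → ℝ} {α : ℝ} (hα : α ∈ naturalExtensionSet V P Z) :
    ∃ Y ∈ V, (∀ ω, Y ω ≤ Z ω) ∧ α ≤ P Y := by
  obtain ⟨m, X, s, hX, hs, hsup⟩ := hα
  have hG := sum_mul_mem univ s hX
  refine ⟨fun ω => (∑ i, s i * X i ω) + (α - ∑ i, s i * P (X i)), V.add_mem hG (hconst _),
    fun ω => ?_, ?_⟩
  · have := Real.apply_neg_of_iSup_neg hsup ω
    simp only [mul_sub, Finset.sum_sub_distrib] at this
    linarith
  · rw [map_add_const hconst hA1 hG]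
    linarith [sum_mul_map_le_map_sum hA2 hA3 univ hs hX]

theorem sub_mem_naturalExtensionSet [Nonempty Ω] {Y Z : Ω → ℝ} (hY : Y ∈ V)
    (hYZ : ∀ ω, Y ω ≤ Z ω) {ε : ℝ} (hε : 0 < ε) : P Y - ε ∈ naturalExtensionSet V P Z := by
  refine ⟨1, fun _ => Y, fun _ => 1, fun _ => hY, fun _ => zero_le_one, ?_⟩
  refine (ciSup_le fun ω => ?_).trans_lt (neg_lt_zero.2 hε)
  simp only [Fin.sum_univ_one, one_mul]
  linarith [hYZ ω]

end LowerPrevision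

open LowerPrevision in
theorem naturalExtension_eq_sup_dominated_general
    {Ω : Type*} [Nonempty Ω] (V : Submodule ℝ (Ω → ℝ))
    (hconst : ∀ c : ℝ, (fun _ : Ω => c) ∈ V)
    (P : (Ω → ℝ) → ℝ)
    (hA1 : ∀ X ∈ V, ∀ Y ∈ V, P X - P Y ≤ ⨆ ω, (X ω - Y ω))
    (hA2 : ∀ X ∈ V, ∀ t : ℝ, 0 ≤ t → P (fun ω => t * X ω) = t * P X)
    (hA3 : ∀ X ∈ V, ∀ Y ∈ V, P X + P Y ≤ P (fun ω => X ω + Y ω))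
    (Z : Ω → ℝ) :
    sSup {α : ℝ | ∃ (m : ℕ) (X : Fin m → (Ω → ℝ)) (s : Fin m → ℝ),
        (∀ i, X i ∈ V) ∧ (∀ i, 0 ≤ s i) ∧
        (⨆ ω, (∑ i, s i * (X i ω - P (X i)) - (Z ω - α))) < 0}
      = sSup {r : ℝ | ∃ Y ∈ V, (∀ ω, Y ω ≤ Z ω) ∧ r = P Y} := by
  refine Real.sSup_eq_sSup_of_forall_exists_le_of_forall_sub_mem (fun α hα => ?_) ?_
  · obtain ⟨Y, hY, hYZ, hαY⟩ :=
      exists_dominated_le_of_mem_naturalExtensionSet hconst hA1 hA2 hA3 hα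
    exact ⟨P Y, ⟨Y, hY, hYZ, rfl⟩, hαY⟩
  · rintro _ ⟨Y, hY, hYZ, rfl⟩ ε hε
    exact sub_mem_naturalExtensionSet hY hYZ hε

/-- for a coherent lower prevision on a linear space of gambles containing
constants, the natural extension at any gamble `Z` is `sup{P Y : Y ∈ X, Y ≤ Z}`. -/
theorem naturalExtension_eq_sup_dominated
    {Ω : Type*} [Nonempty Ω] (V : Submodule ℝ (Ω → ℝ))
    (hconst : ∀ c : ℝ, (fun _ : Ω => c) ∈ V)
    (hbdd : ∀ X ∈ V, BddAbove (Set.range X) ∧ BddBelow (Set.range X))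
    (P : (Ω → ℝ) → ℝ)
    (hA1 : ∀ X ∈ V, ∀ Y ∈ V, P X - P Y ≤ ⨆ ω, (X ω - Y ω))
    (hA2 : ∀ X ∈ V, ∀ t : ℝ, 0 ≤ t → P (fun ω => t * X ω) = t * P X)
    (hA3 : ∀ X ∈ V, ∀ Y ∈ V, P X + P Y ≤ P (fun ω => X ω + Y ω))
    (Z : Ω → ℝ) (hZa : BddAbove (Set.range Z)) (hZb : BddBelow (Set.range Z)) :
    sSup {α : ℝ | ∃ (m : ℕ) (X : Fin m → (Ω → ℝ)) (s : Fin m → ℝ),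
        (∀ i, X i ∈ V) ∧ (∀ i, 0 ≤ s i) ∧
        (⨆ ω, (∑ i, s i * (X i ω - P (X i)) - (Z ω - α))) < 0}
      = sSup {r : ℝ | ∃ Y ∈ V, (∀ ω, Y ω ≤ Z ω) ∧ r = P Y} :=
  naturalExtension_eq_sup_dominated_general V hconst P hA1 hA2 hA3 Z
end

section
/- If P is a coherent unconditional lower prevision on a linear space X of gambles containing constants, then the 2-coherent natural extension equals the coherent natural extension: E_2(Z) = E(Z) for every gamble Z. -/
lemma aux_sum_prev {Ω : Type*} (V : Submodule ℝ (Ω → ℝ)) (P : (Ω → ℝ) → ℝ)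
    (hA2 : ∀ X ∈ V, ∀ t : ℝ, 0 ≤ t → P (fun ω => t * X ω) = t * P X)
    (hA3 : ∀ X ∈ V, ∀ Y ∈ V, P X + P Y ≤ P (fun ω => X ω + Y ω)) :
    ∀ (m : ℕ) (X : Fin m → (Ω → ℝ)) (s : Fin m → ℝ), (∀ i, X i ∈ V) → (∀ i, 0 ≤ s i) →
      ∑ i, s i * P (X i) ≤ P (fun ω => ∑ i, s i * X i ω) := by
  have h0 : P (fun _ : Ω => 0) = 0 := by
    have := hA2 (fun _ => (0:ℝ)) (V.zero_mem) 0 le_rfl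
    simpa using this
  intro m
  induction m with
  | zero =>
    intro X s _ _
    simp [h0]
  | succ n ih =>
    intro X s hXV hs
    have hmemtail : (fun ω => ∑ i : Fin n, s i.succ * X i.succ ω) ∈ V := by
      have : (fun ω => ∑ i : Fin n, s i.succ * X i.succ ω)
          = ∑ i : Fin n, s i.succ • X i.succ := by
        funext ω; simp [Finset.sum_apply]
      rw [this]
      exact Submodule.sum_mem _ fun i _ => Submodule.smul_mem _ _ (hXV i.succ)
    have hmem0 : (fun ω => s 0 * X 0 ω) ∈ V := by
      have : (fun ω => s 0 * X 0 ω) = s 0 • X 0 := by funext ω; simp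
      rw [this]; exact Submodule.smul_mem _ _ (hXV 0)
    have key := hA3 _ hmem0 _ hmemtail
    have h2 := hA2 (X 0) (hXV 0) (s 0) (hs 0)
    have ihh := ih (fun i => X i.succ) (fun i => s i.succ) (fun i => hXV i.succ)
      (fun i => hs i.succ)
    calc ∑ i : Fin (n+1), s i * P (X i)
        = s 0 * P (X 0) + ∑ i : Fin n, s i.succ * P (X i.succ) := by
          rw [Fin.sum_univ_succ]
      _ ≤ P (fun ω => s 0 * X 0 ω) + P (fun ω => ∑ i : Fin n, s i.succ * X i.succ ω) := by
          rw [h2]; exact add_le_add le_rfl ihh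
      _ ≤ P (fun ω => s 0 * X 0 ω + ∑ i : Fin n, s i.succ * X i.succ ω) := key
      _ = P (fun ω => ∑ i : Fin (n+1), s i * X i ω) := by
          congr 1; funext ω; rw [Fin.sum_univ_succ]

/-- if `P` is coherent on a linear space of gambles containing constants,
the 2-coherent natural extension coincides with the coherent natural extension. -/
theorem twoCoherent_eq_coherent_naturalExtension
    {Ω : Type*} [Nonempty Ω] (V : Submodule ℝ (Ω → ℝ))
    (hconst : ∀ c : ℝ, (fun _ : Ω => c) ∈ V)
    (hbdd : ∀ X ∈ V, BddAbove (Set.range X) ∧ BddBelow (Set.range X))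
    (P : (Ω → ℝ) → ℝ)
    (hA1 : ∀ X ∈ V, ∀ Y ∈ V, P X - P Y ≤ ⨆ ω, (X ω - Y ω))
    (hA2 : ∀ X ∈ V, ∀ t : ℝ, 0 ≤ t → P (fun ω => t * X ω) = t * P X)
    (hA3 : ∀ X ∈ V, ∀ Y ∈ V, P X + P Y ≤ P (fun ω => X ω + Y ω)) :
    ∀ Z : Ω → ℝ, BddAbove (Set.range Z) → BddBelow (Set.range Z) →
      sSup {α : ℝ | ∃ X ∈ V, ∃ s : ℝ, 0 ≤ s ∧
          (⨆ ω, (s * (X ω - P X) - (Z ω - α))) < 0}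
        = sSup {α : ℝ | ∃ (m : ℕ) (X : Fin m → (Ω → ℝ)) (s : Fin m → ℝ),
          (∀ i, X i ∈ V) ∧ (∀ i, 0 ≤ s i) ∧
          (⨆ ω, (∑ i, s i * (X i ω - P (X i)) - (Z ω - α))) < 0} := by
  intro Z _ _
  congr 1
  ext α
  simp only [Set.mem_setOf_eq]
  constructor
  · rintro ⟨X, hXV, s, hs, hsup⟩
    refine ⟨1, fun _ => X, fun _ => s, fun _ => hXV, fun _ => hs, ?_⟩
    have : (fun ω => ∑ i : Fin 1, s * (X ω - P X) - (Z ω - α))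
        = fun ω => s * (X ω - P X) - (Z ω - α) := by
      funext ω; simp
    rw [this]; exact hsup
  · rintro ⟨m, X, s, hXV, hs, hsup⟩
    set Y : Ω → ℝ := fun ω => ∑ i, s i * X i ω with hY
    have hYV : Y ∈ V := by
      have : Y = ∑ i, s i • X i := by funext ω; simp [hY, Finset.sum_apply]
      rw [this]
      exact Submodule.sum_mem _ fun i _ => Submodule.smul_mem _ _ (hXV i)
    refine ⟨Y, hYV, 1, zero_le_one, ?_⟩
    have hP := aux_sum_prev V P hA2 hA3 m X s hXV hs
    have hBdd : BddAbove (Set.range fun ω => ∑ i, s i * (X i ω - P (X i)) - (Z ω - α)) := by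
      by_contra h
      rw [Real.iSup_of_not_bddAbove h] at hsup
      exact lt_irrefl 0 hsup
    have hle : ∀ ω, 1 * (Y ω - P Y) - (Z ω - α)
        ≤ ∑ i, s i * (X i ω - P (X i)) - (Z ω - α) := by
      intro ω
      have : ∑ i, s i * (X i ω - P (X i)) = Y ω - ∑ i, s i * P (X i) := by
        simp [hY, mul_sub, Finset.sum_sub_distrib]
      rw [this, one_mul]
      have := hP
      linarith [hP]
    calc (⨆ ω, (1 * (Y ω - P Y) - (Z ω - α)))
        ≤ ⨆ ω, (∑ i, s i * (X i ω - P (X i)) - (Z ω - α)) := ciSup_mono hBdd hle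
      _ < 0 := hsup
end

section
/- Let 𝒫 be a partition of Ω, let P be a 2-coherent lower probability on the powerset algebra A(𝒫) (so P(∅)=0, P(Ω)=1, P monotone, and P(E) + P(Eᶜ) ≤ 1 with P(E) ∈ [0,1]), and let Z be a bounded function on 𝒫. Then the 2-coherent natural extension of P at Z equals max{ inf Z, sup{ inf(Z|E)·P(E) + inf(Z|Eᶜ)·(1 - P(E)) : E ∈ A(𝒫), E ∉ {∅, Ω}, inf(Z|E) > inf(Z|Eᶜ) } }. -/
private lemma coe_le_sSup_of_forall_lt {S : Set ℝ} {c : ℝ}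
    (h : ∀ x : ℝ, x < c → x ∈ S) :
    (c : EReal) ≤ sSup ((fun x : ℝ => (x : EReal)) '' S) := by
  rw [le_sSup_iff]
  intro b hb
  by_contra hlt
  push_neg at hlt
  obtain ⟨x, hbx, hxc⟩ := exists_between hlt
  lift x to ℝ using ⟨(hxc.trans_le le_top).ne, (bot_le.trans_lt hbx).ne'⟩
  have hx : x ∈ S := h x (by exact_mod_cast hxc)
  exact absurd (hb ⟨x, hx, rfl⟩) (not_le.mpr hbx)

/-- formula for the 2-coherent natural extension of a 2-coherent lower
probability on the powerset algebra of a partition (atoms identified with points of `Ω`).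
The suprema are taken in the extended reals (so a supremum over an empty set is `⊥`). -/
theorem twoCoherentNatExt_formula
    {Ω : Type*} [Nonempty Ω] (P : Set Ω → ℝ) (Z : Ω → ℝ)
    (hZa : BddAbove (Set.range Z)) (hZb : BddBelow (Set.range Z))
    (h2coh : ∀ E₀ E₁ : Set Ω, ∀ s₀ s₁ : ℝ, 0 ≤ s₀ → 0 ≤ s₁ →
      0 ≤ ⨆ ω, (s₁ * (Set.indicator E₁ (fun _ => (1 : ℝ)) ω - P E₁) -
                s₀ * (Set.indicator E₀ (fun _ => (1 : ℝ)) ω - P E₀))) :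
    sSup ((fun x : ℝ => (x : EReal)) ''
        {α : ℝ | ∃ (E : Set Ω) (s : ℝ), 0 ≤ s ∧
          (⨆ ω, (s * (Set.indicator E (fun _ => (1 : ℝ)) ω - P E) - (Z ω - α))) < 0})
      = max ((sInf (Set.range Z) : ℝ) : EReal)
          (sSup ((fun x : ℝ => (x : EReal)) ''
            {v : ℝ | ∃ E : Set Ω, E ≠ ∅ ∧ E ≠ Set.univ ∧
              sInf (Z '' Eᶜ) < sInf (Z '' E) ∧
              v = sInf (Z '' E) * P E + sInf (Z '' Eᶜ) * (1 - P E)})) := by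
  obtain ⟨m, hm⟩ := id hZb
  simp only [mem_lowerBounds, Set.mem_range, forall_exists_index,
    forall_apply_eq_imp_iff] at hm
  -- indicator bounds
  have hind : ∀ (E : Set Ω) (ω : Ω),
      Set.indicator E (fun _ => (1 : ℝ)) ω = 0 ∨
      Set.indicator E (fun _ => (1 : ℝ)) ω = 1 := by
    intro E ω
    by_cases h : ω ∈ E
    · right; simp [Set.indicator_of_mem h]
    · left; simp [Set.indicator_of_notMem h]
  have hind01 : ∀ (E : Set Ω) (ω : Ω),
      0 ≤ Set.indicator E (fun _ => (1 : ℝ)) ω ∧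
      Set.indicator E (fun _ => (1 : ℝ)) ω ≤ 1 := by
    intro E ω; rcases hind E ω with h | h <;> rw [h] <;> norm_num
  -- basic properties of P
  have hP0 : ∀ E : Set Ω, 0 ≤ P E := by
    intro E
    refine le_trans (h2coh E E 1 0 zero_le_one le_rfl) (ciSup_le fun ω => ?_)
    have := (hind01 E ω).1; nlinarith
  have hP1 : ∀ E : Set Ω, P E ≤ 1 := by
    intro E
    have h := h2coh E E 0 1 le_rfl zero_le_one
    have h2 : (⨆ ω, (1 * (Set.indicator E (fun _ => (1:ℝ)) ω - P E) -
        0 * (Set.indicator E (fun _ => (1:ℝ)) ω - P E))) ≤ 1 - P E :=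
      ciSup_le fun ω => by have := (hind01 E ω).2; nlinarith
    linarith
  have hPe : P ∅ = 0 := by
    refine le_antisymm ?_ (hP0 ∅)
    have h := h2coh ∅ ∅ 0 1 le_rfl zero_le_one
    have : (⨆ _ : Ω, (1 * ((0:ℝ) - P ∅) - 0 * (0 - P ∅))) = 1 * (0 - P ∅) - 0 * (0 - P ∅) :=
      ciSup_const
    simp only [Set.indicator_empty] at h
    rw [this] at h; linarith
  have hPu : P Set.univ = 1 := by
    refine le_antisymm (hP1 _) ?_
    have h := h2coh Set.univ Set.univ 1 0 zero_le_one le_rfl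
    have : (⨆ _ : Ω, ((0:ℝ) * (1 - P Set.univ) - 1 * (1 - P Set.univ)))
        = 0 * (1 - P Set.univ) - 1 * (1 - P Set.univ) := ciSup_const
    simp only [Set.indicator_univ] at h
    rw [this] at h; linarith
  -- bddAbove of the relevant families
  have hbdd : ∀ (E : Set Ω) (s α : ℝ), 0 ≤ s →
      BddAbove (Set.range fun ω =>
        s * (Set.indicator E (fun _ => (1 : ℝ)) ω - P E) - (Z ω - α)) := by
    intro E s α hs
    refine ⟨s * (1 - P E) + (α - m), ?_⟩
    rintro _ ⟨ω, rfl⟩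
    have h1 := (hind01 E ω).2
    have h2 := hm ω
    have : s * (Set.indicator E (fun _ => (1 : ℝ)) ω - P E) ≤ s * (1 - P E) :=
      mul_le_mul_of_nonneg_left (by linarith) hs
    simp only; linarith
  apply le_antisymm
  · -- LHS ≤ RHS
    refine sSup_le ?_
    rintro _ ⟨α, ⟨E, s, hs, hsup⟩, rfl⟩
    have hall : ∀ ω, s * (Set.indicator E (fun _ => (1 : ℝ)) ω - P E) - (Z ω - α) < 0 :=
      fun ω => lt_of_le_of_lt (le_ciSup (hbdd E s α hs) ω) hsup
    by_cases htriv : E = ∅ ∨ E = Set.univ ∨ s = 0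
    · -- trivial witnesses: α ≤ inf Z
      have hαZ : ∀ ω, α < Z ω := by
        intro ω
        have h := hall ω
        rcases htriv with rfl | rfl | rfl
        · simp only [Set.indicator_empty, hPe] at h; linarith
        · simp only [Set.indicator_univ, hPu] at h; linarith
        · simp only [zero_mul] at h; linarith
      have : α ≤ sInf (Set.range Z) :=
        le_csInf (Set.range_nonempty Z) (by rintro _ ⟨ω, rfl⟩; exact (hαZ ω).le)
      exact le_max_of_le_left (EReal.coe_le_coe_iff.mpr this)
    · rw [not_or, not_or] at htriv
      obtain ⟨hE0, hE1, hs0⟩ := htriv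
      have hspos : 0 < s := lt_of_le_of_ne hs (Ne.symm hs0)
      clear hspos
      have hEne : E.Nonempty := Set.nonempty_iff_ne_empty.mpr hE0
      have hEcne : Eᶜ.Nonempty := by
        rw [Set.nonempty_compl]; exact hE1
      have hbE : BddBelow (Z '' E) := hZb.mono (Set.image_subset_range Z E)
      have hbEc : BddBelow (Z '' Eᶜ) := hZb.mono (Set.image_subset_range Z Eᶜ)
      set a := sInf (Z '' E) with ha_def
      set b := sInf (Z '' Eᶜ) with hb_def
      have ha : α + s * (1 - P E) ≤ a := by
        refine le_csInf (hEne.image Z) ?_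
        rintro _ ⟨ω, hω, rfl⟩
        have h := hall ω
        rw [Set.indicator_of_mem hω] at h
        linarith
      have hb : α - s * P E ≤ b := by
        refine le_csInf (hEcne.image Z) ?_
        rintro _ ⟨ω, hω, rfl⟩
        have h := hall ω
        rw [Set.indicator_of_notMem (Set.notMem_of_mem_compl hω)] at h
        linarith
      by_cases hab : b < a
      · -- α ≤ a * P E + b * (1 - P E)
        have hα : α ≤ a * P E + b * (1 - P E) := by
          have h0 := hP0 E
          have h1 := hP1 E
          nlinarith [mul_le_mul_of_nonneg_left ha h0,
            mul_le_mul_of_nonneg_left hb (by linarith : (0:ℝ) ≤ 1 - P E)]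
        refine le_max_of_le_right (le_trans ?_ (le_sSup ⟨a * P E + b * (1 - P E),
          ⟨E, hE0, hE1, hab, rfl⟩, rfl⟩))
        exact EReal.coe_le_coe_iff.mpr hα
      · -- a ≤ b : α ≤ inf Z
        push_neg at hab
        have hαZ : ∀ ω, α ≤ Z ω := by
          intro ω
          by_cases hω : ω ∈ E
          · have : a ≤ Z ω := csInf_le hbE ⟨ω, hω, rfl⟩
            have hPE := hP1 E
            nlinarith
          · have : b ≤ Z ω := csInf_le hbEc ⟨ω, hω, rfl⟩
            have hPE := hP1 E
            nlinarith
        have : α ≤ sInf (Set.range Z) :=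
          le_csInf (Set.range_nonempty Z) (by rintro _ ⟨ω, rfl⟩; exact hαZ ω)
        exact le_max_of_le_left (EReal.coe_le_coe_iff.mpr this)
  · -- RHS ≤ LHS
    refine max_le ?_ ?_
    · -- inf Z ≤ LHS
      refine coe_le_sSup_of_forall_lt fun x hx => ?_
      refine ⟨∅, 0, le_rfl, ?_⟩
      refine lt_of_le_of_lt (ciSup_le fun ω => ?_) (by linarith : x - sInf (Set.range Z) < 0)
      have : sInf (Set.range Z) ≤ Z ω := csInf_le hZb ⟨ω, rfl⟩
      simp only [zero_mul]; linarith
    · -- second sup ≤ LHS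
      refine sSup_le ?_
      rintro _ ⟨v, ⟨E, hE0, hE1, hab, rfl⟩, rfl⟩
      set a := sInf (Z '' E) with ha_def
      set b := sInf (Z '' Eᶜ) with hb_def
      have hEne : E.Nonempty := Set.nonempty_iff_ne_empty.mpr hE0
      have hbE : BddBelow (Z '' E) := hZb.mono (Set.image_subset_range Z E)
      have hbEc : BddBelow (Z '' Eᶜ) := hZb.mono (Set.image_subset_range Z Eᶜ)
      refine coe_le_sSup_of_forall_lt fun x hx => ?_
      refine ⟨E, a - b, by linarith, ?_⟩
      refine lt_of_le_of_lt (ciSup_le fun ω => ?_)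
        (by linarith : x - (a * P E + b * (1 - P E)) < 0)
      by_cases hω : ω ∈ E
      · have hZω : a ≤ Z ω := csInf_le hbE ⟨ω, hω, rfl⟩
        rw [Set.indicator_of_mem hω]
        nlinarith
      · have hZω : b ≤ Z ω := csInf_le hbEc ⟨ω, hω, rfl⟩
        rw [Set.indicator_of_notMem hω]
        nlinarith
end

section
/- Let P be a centered 2-convex lower probability on the powerset algebra A(𝒫) of a partition 𝒫 (in particular P(∅) = 0, P(Ω) = 1), and Z a gamble on 𝒫. Then the 2-convex natural extension of P at Z equals max{ inf Z, sup{ P(E) + min{inf(Z|E) - 1, inf(Z|Eᶜ)} : E ∈ A(𝒫)\{∅,Ω}, inf(Z|E) > inf(Z|Eᶜ) - 1 } }. -/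
private lemma ereal_le_of_forall_lt {r : ℝ} {s : EReal}
    (h : ∀ x : ℝ, x < r → (x : EReal) ≤ s) : (r : EReal) ≤ s := by
  by_contra hs
  push_neg at hs
  obtain ⟨y, hy1, hy2⟩ := EReal.lt_iff_exists_real_btwn.mp hs
  exact absurd (h y (by exact_mod_cast hy2)) (not_le.mpr hy1)

/-- formula for the 2-convex natural extension of a centered 2-convex lower
probability on the powerset algebra of a partition (atoms identified with points of `Ω`).
The suprema are taken in the extended reals (so a supremum over an empty set is `⊥`). -/
theorem twoConvexNatExt_formula
    {Ω : Type*} [Nonempty Ω] (P : Set Ω → ℝ) (Z : Ω → ℝ)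
    (hZa : BddAbove (Set.range Z)) (hZb : BddBelow (Set.range Z))
    (h2conv : ∀ E₀ E₁ : Set Ω,
      0 ≤ ⨆ ω, ((Set.indicator E₁ (fun _ => (1 : ℝ)) ω - P E₁) -
                (Set.indicator E₀ (fun _ => (1 : ℝ)) ω - P E₀)))
    (hcent : P ∅ = 0) :
    sSup ((fun x : ℝ => (x : EReal)) ''
        {α : ℝ | ∃ E : Set Ω,
          (⨆ ω, ((Set.indicator E (fun _ => (1 : ℝ)) ω - P E) - (Z ω - α))) < 0})
      = max ((sInf (Set.range Z) : ℝ) : EReal)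
          (sSup ((fun x : ℝ => (x : EReal)) ''
            {v : ℝ | ∃ E : Set Ω, E ≠ ∅ ∧ E ≠ Set.univ ∧
              sInf (Z '' Eᶜ) - 1 < sInf (Z '' E) ∧
              v = P E + min (sInf (Z '' E) - 1) (sInf (Z '' Eᶜ))})) := by
  obtain ⟨zl, hzl⟩ := hZb
  simp only [mem_lowerBounds] at hzl
  have hzl' : ∀ ω, zl ≤ Z ω := fun ω => hzl _ ⟨ω, rfl⟩
  set t : ℝ := sInf (Set.range Z) with ht
  have hrne : (Set.range Z).Nonempty := Set.range_nonempty Z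
  have hrbb : BddBelow (Set.range Z) := ⟨zl, fun y hy => hzl y hy⟩
  have hindb : ∀ (E : Set Ω) (ω : Ω), Set.indicator E (fun _ => (1:ℝ)) ω ≤ 1 ∧
      0 ≤ Set.indicator E (fun _ => (1:ℝ)) ω := by
    intro E ω
    by_cases hω : ω ∈ E
    · rw [Set.indicator_of_mem hω]; norm_num
    · rw [Set.indicator_of_notMem hω]; norm_num
  -- P E ≤ 1 for all E
  have hPle1 : ∀ E : Set Ω, P E ≤ 1 := by
    intro E
    have h := h2conv ∅ E
    have hb : (⨆ ω, ((Set.indicator E (fun _ => (1:ℝ)) ω - P E) -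
        (Set.indicator (∅ : Set Ω) (fun _ => (1:ℝ)) ω - P ∅))) ≤ 1 - P E := by
      apply ciSup_le
      intro ω
      have h1 := (hindb E ω).1
      simp only [Set.indicator_empty, hcent]
      simp
      linarith
    linarith [le_trans h hb]
  have htle : ∀ ω, t ≤ Z ω := fun ω => csInf_le hrbb ⟨ω, rfl⟩
  have hsub : ∀ E : Set Ω, BddBelow (Z '' E) :=
    fun E => BddBelow.mono (Set.image_subset_range Z E) hrbb
  -- bddAbove of the sup argument
  have hbdd : ∀ (E : Set Ω) (α : ℝ), BddAbove (Set.range fun ω =>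
      ((Set.indicator E (fun _ => (1:ℝ)) ω - P E) - (Z ω - α))) := by
    intro E α
    refine ⟨1 - P E - zl + α, ?_⟩
    rintro x ⟨ω, rfl⟩
    have h1 := (hindb E ω).1
    have h2 := hzl' ω
    dsimp only
    linarith
  apply le_antisymm
  · -- LHS ≤ RHS
    apply sSup_le
    rintro x ⟨α, ⟨E, hE⟩, rfl⟩
    have hall : ∀ ω, ((Set.indicator E (fun _ => (1:ℝ)) ω - P E) - (Z ω - α)) < 0 :=
      fun ω => lt_of_le_of_lt (le_ciSup (hbdd E α) ω) hE
    by_cases hE0 : E = ∅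
    · subst hE0
      have hαt : α ≤ t := by
        apply le_csInf hrne
        rintro y ⟨ω, rfl⟩
        have h1 := hall ω
        simp only [Set.indicator_empty, hcent] at h1
        simp at h1
        linarith
      exact le_trans (EReal.coe_le_coe_iff.mpr hαt) (le_max_left _ _)
    · by_cases hEu : E = Set.univ
      · subst hEu
        have hαt : α ≤ t := by
          apply le_csInf hrne
          rintro y ⟨ω, rfl⟩
          have h1 := hall ω
          rw [Set.indicator_of_mem (Set.mem_univ ω)] at h1
          have h2 := hPle1 Set.univ
          linarith
        exact le_trans (EReal.coe_le_coe_iff.mpr hαt) (le_max_left _ _)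
      · -- proper E
        have hEne : E.Nonempty := Set.nonempty_iff_ne_empty.mpr hE0
        have hEcne : Eᶜ.Nonempty := Set.nonempty_compl.mpr hEu
        set a : ℝ := sInf (Z '' E) with ha
        set b : ℝ := sInf (Z '' Eᶜ) with hb
        have haa : α + 1 - P E ≤ a := by
          apply le_csInf (hEne.image Z)
          rintro y ⟨ω, hω, rfl⟩
          have h1 := hall ω
          rw [Set.indicator_of_mem hω] at h1
          linarith
        have hbb : α - P E ≤ b := by
          apply le_csInf (hEcne.image Z)
          rintro y ⟨ω, hω, rfl⟩
          have h1 := hall ω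
          rw [Set.indicator_of_notMem hω] at h1
          linarith
        have hαm : α ≤ P E + min (a - 1) b := by
          rcases min_cases (a - 1) b with ⟨h1, _⟩ | ⟨h1, _⟩ <;> rw [h1] <;> linarith
        by_cases hc : b - 1 < a
        · have hmem : (P E + min (a - 1) b : ℝ) ∈
              {v : ℝ | ∃ E : Set Ω, E ≠ ∅ ∧ E ≠ Set.univ ∧
                sInf (Z '' Eᶜ) - 1 < sInf (Z '' E) ∧
                v = P E + min (sInf (Z '' E) - 1) (sInf (Z '' Eᶜ))} :=
            ⟨E, hE0, hEu, hc, rfl⟩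
          refine le_trans (EReal.coe_le_coe_iff.mpr hαm) (le_trans ?_ (le_max_right _ _))
          exact le_sSup ⟨_, hmem, rfl⟩
        · push_neg at hc
          have hat : a ≤ t := by
            apply le_csInf hrne
            rintro y ⟨ω, rfl⟩
            by_cases hω : ω ∈ E
            · exact csInf_le (hsub E) ⟨ω, hω, rfl⟩
            · have h1 : b ≤ Z ω := csInf_le (hsub Eᶜ) ⟨ω, hω, rfl⟩
              linarith
          have hmin : min (a - 1) b = a - 1 := min_eq_left (by linarith)
          have hαt : α ≤ t := by
            rw [hmin] at hαm
            have := hPle1 E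
            linarith
          exact le_trans (EReal.coe_le_coe_iff.mpr hαt) (le_max_left _ _)
  · -- RHS ≤ LHS
    apply max_le
    · apply ereal_le_of_forall_lt
      intro α hα
      apply le_sSup
      refine ⟨α, ⟨∅, ?_⟩, rfl⟩
      have hle : (⨆ ω, ((Set.indicator (∅ : Set Ω) (fun _ => (1:ℝ)) ω - P ∅) -
          (Z ω - α))) ≤ α - t := by
        apply ciSup_le
        intro ω
        have h1 := htle ω
        simp only [Set.indicator_empty, hcent]
        simp
        linarith
      linarith
    · apply sSup_le
      rintro x ⟨v, ⟨E, hE0, hEu, hcond, hv⟩, rfl⟩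
      apply ereal_le_of_forall_lt
      intro α hα
      apply le_sSup
      refine ⟨α, ⟨E, ?_⟩, rfl⟩
      have hle : (⨆ ω, ((Set.indicator E (fun _ => (1:ℝ)) ω - P E) - (Z ω - α))) ≤ α - v := by
        apply ciSup_le
        intro ω
        by_cases hω : ω ∈ E
        · have h1 : sInf (Z '' E) ≤ Z ω := csInf_le (hsub E) ⟨ω, hω, rfl⟩
          have h2 : v ≤ P E + (sInf (Z '' E) - 1) := by
            rw [hv]
            have := min_le_left (sInf (Z '' E) - 1) (sInf (Z '' Eᶜ)); linarith
          rw [Set.indicator_of_mem hω]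
          linarith
        · have h1 : sInf (Z '' Eᶜ) ≤ Z ω := csInf_le (hsub Eᶜ) ⟨ω, hω, rfl⟩
          have h2 : v ≤ P E + sInf (Z '' Eᶜ) := by
            rw [hv]
            have := min_le_right (sInf (Z '' E) - 1) (sInf (Z '' Eᶜ)); linarith
          rw [Set.indicator_of_notMem hω]
          linarith
      linarith
end

section
/- Let 𝒫 be a partition of Ω and C|D a nontrivial conditional event (C∧D ≠ ∅, C∧D ≠ D). Define the inner conditional event (C|D)_* = (C∧D)_* | [(C∧D)_* ∨ (¬C∧D)^*], where E_* is the union of atoms of 𝒫 contained in E and E^* the union of atoms meeting E. Then (C|D)_* belongs to A(𝒫)|A(𝒫)⁰ and is the maximum, with respect to the Goodman–Nguyen relation, of the set m(C|D) = {A|B : A, B ∈ A(𝒫), B ≠ ∅, A|B ≼ C|D}. -/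
/-- The Goodman–Nguyen relation on conditional events `A|B` (pairs of events):
`A|B ≼ C|D` iff `A∩B ⊆ C∩D` and `Cᶜ∩D ⊆ Aᶜ∩B`. -/
def GN {Ω : Type*} (p q : Set Ω × Set Ω) : Prop :=
  p.1 ∩ p.2 ⊆ q.1 ∩ q.2 ∧ q.1ᶜ ∩ q.2 ⊆ p.1ᶜ ∩ p.2

/-- The partition is given by the fibers of `π : Ω → I`.  An event is logically
dependent on the partition (i.e. belongs to its powerset algebra) iff it is a union
of atoms. -/
def LogicallyDep {Ω I : Type*} (π : Ω → I) (E : Set Ω) : Prop :=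
  ∀ ω ω' : Ω, π ω = π ω' → (ω ∈ E ↔ ω' ∈ E)

/-- Inner event `E_*`: union of the atoms contained in `E`. -/
def innerEvent {Ω I : Type*} (π : Ω → I) (E : Set Ω) : Set Ω :=
  {ω | ∀ ω' : Ω, π ω' = π ω → ω' ∈ E}

/-- Outer event `E^*`: union of the atoms meeting `E`. -/
def outerEvent {Ω I : Type*} (π : Ω → I) (E : Set Ω) : Set Ω :=
  {ω | ∃ ω' : Ω, π ω' = π ω ∧ ω' ∈ E}

/-- the inner conditional event
`(C|D)_* = (C∩D)_* | ((C∩D)_* ∪ (Cᶜ∩D)^*)` of a nontrivial conditional event `C|D`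
belongs to `A(𝒫)|A(𝒫)⁰` and is the maximum, w.r.t. the Goodman–Nguyen relation, of
`m(C|D) = {A|B : A, B ∈ A(𝒫), B ≠ ∅, A|B ≼ C|D}`. -/
theorem innerConditionalEvent_max
    {Ω I : Type*} (π : Ω → I) (C D : Set Ω)
    (hnontriv₁ : (C ∩ D).Nonempty) (hnontriv₂ : C ∩ D ≠ D) :
    LogicallyDep π (innerEvent π (C ∩ D)) ∧
    LogicallyDep π (innerEvent π (C ∩ D) ∪ outerEvent π (Cᶜ ∩ D)) ∧
    (innerEvent π (C ∩ D) ∪ outerEvent π (Cᶜ ∩ D)).Nonempty ∧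
    GN (innerEvent π (C ∩ D), innerEvent π (C ∩ D) ∪ outerEvent π (Cᶜ ∩ D)) (C, D) ∧
    (∀ A B : Set Ω, LogicallyDep π A → LogicallyDep π B → B.Nonempty →
      GN (A, B) (C, D) →
      GN (A, B) (innerEvent π (C ∩ D), innerEvent π (C ∩ D) ∪ outerEvent π (Cᶜ ∩ D))) := by
  have hinner : LogicallyDep π (innerEvent π (C ∩ D)) := by
    intro ω ω' h
    constructor <;> intro hm ω'' h'' <;> exact hm ω'' (by rw [h'', h])
  have houter : LogicallyDep π (outerEvent π (Cᶜ ∩ D)) := by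
    intro ω ω' h
    constructor <;> rintro ⟨w, hw, hwm⟩ <;> exact ⟨w, by rw [hw, h], hwm⟩
  have hunion : LogicallyDep π (innerEvent π (C ∩ D) ∪ outerEvent π (Cᶜ ∩ D)) := by
    intro ω ω' h
    constructor <;> rintro (h1 | h2)
    · exact Or.inl ((hinner ω ω' h).mp h1)
    · exact Or.inr ((houter ω ω' h).mp h2)
    · exact Or.inl ((hinner ω ω' h).mpr h1)
    · exact Or.inr ((houter ω ω' h).mpr h2)
  have hXsub : innerEvent π (C ∩ D) ⊆ C ∩ D := fun ω hω => hω ω rfl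
  refine ⟨hinner, hunion, ?_, ⟨?_, ?_⟩, ?_⟩
  · -- nonempty
    have : ∃ ω, ω ∈ D ∧ ω ∉ C := by
      by_contra hc
      push_neg at hc
      exact hnontriv₂ (Set.Subset.antisymm Set.inter_subset_right
        (fun ω hω => ⟨hc ω hω, hω⟩))
    obtain ⟨ω, hD, hC⟩ := this
    exact ⟨ω, Or.inr ⟨ω, rfl, hC, hD⟩⟩
  · -- A∩B ⊆ C∩D part of GN for inner cond event
    intro ω hω
    exact hXsub hω.1
  · -- Cᶜ∩D ⊆ complement part
    rintro ω ⟨hC, hD⟩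
    refine ⟨fun hX => hC (hXsub hX).1, Or.inr ⟨ω, rfl, hC, hD⟩⟩
  · -- maximality
    rintro A B hA hB _ ⟨h1, h2⟩
    constructor
    · rintro ω ⟨hωA, hωB⟩
      have hX : ω ∈ innerEvent π (C ∩ D) := by
        intro ω' hπ
        exact h1 ⟨(hA ω ω' hπ.symm).mp hωA, (hB ω ω' hπ.symm).mp hωB⟩
      exact ⟨hX, Or.inl hX⟩
    · rintro ω ⟨hX, (h | h)⟩
      · exact absurd h hX
      · obtain ⟨ω', hπ, hω'⟩ := h
        have := h2 hω'
        exact ⟨fun hωA => this.1 ((hA ω ω' hπ.symm).mp hωA), (hB ω' ω hπ).mp this.2⟩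
end

section
/- Let P be an unconditional lower prevision on a set D of gambles and Z a gamble. The coherent natural extension E(Z) is finite (for all Z) if and only if P avoids sure loss: sup Σ_{i=1}^n s_i(X_i - P(X_i)) ≥ 0 for all n, X_i ∈ D, s_i ≥ 0. -/
private lemma bdd_sum_aux {Ω : Type*} {m : ℕ} (X : Fin m → (Ω → ℝ)) (s : Fin m → ℝ)
    (hs : ∀ i, 0 ≤ s i) (hb : ∀ i, BddAbove (Set.range (X i))) (c : Fin m → ℝ) :
    BddAbove (Set.range (fun ω => ∑ i, s i * (X i ω - c i))) := by
  choose u hu using hb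
  refine ⟨∑ i, s i * (u i - c i), ?_⟩
  rintro _ ⟨ω, rfl⟩
  apply Finset.sum_le_sum
  intro i _
  have h1 : X i ω ≤ u i := hu i (Set.mem_range_self ω)
  nlinarith [hs i]

/-- the coherent natural extension `E(Z)` is finite for all gambles `Z`
iff `P` avoids sure loss. -/
theorem coherentNatExt_finite_iff_ASL
    {Ω : Type*} [Nonempty Ω] (D : Set (Ω → ℝ)) (P : (Ω → ℝ) → ℝ)
    (hbdd : ∀ X ∈ D, BddAbove (Set.range X) ∧ BddBelow (Set.range X)) :
    (∀ Z : Ω → ℝ, BddAbove (Set.range Z) → BddBelow (Set.range Z) →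
      ∃ r : ℝ,
        sSup ((fun x : ℝ => (x : EReal)) ''
          {α : ℝ | ∃ (m : ℕ) (X : Fin m → (Ω → ℝ)) (s : Fin m → ℝ),
            (∀ i, X i ∈ D) ∧ (∀ i, 0 ≤ s i) ∧
            (⨆ ω, (∑ i, s i * (X i ω - P (X i)) - (Z ω - α))) < 0}) = (r : EReal)) ↔
    (∀ (n : ℕ) (X : Fin n → (Ω → ℝ)), (∀ i, X i ∈ D) →
      ∀ s : Fin n → ℝ, (∀ i, 0 ≤ s i) →
      0 ≤ ⨆ ω, ∑ i, s i * (X i ω - P (X i))) := by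
  constructor
  · intro H n X hX s hs
    by_contra h
    push_neg at h
    obtain ⟨δ, hδ⟩ : ∃ δ : ℝ, δ = -(⨆ ω, ∑ i, s i * (X i ω - P (X i))) := ⟨_, rfl⟩
    have hδpos : 0 < δ := by rw [hδ]; linarith
    obtain ⟨r, hr⟩ := H (fun _ => 0)
      (by simp [Set.range_const]) (by simp [Set.range_const])
    have hBA : BddAbove (Set.range (fun ω => ∑ i, s i * (X i ω - P (X i)))) :=
      bdd_sum_aux X s hs (fun i => (hbdd (X i) (hX i)).1) _
    obtain ⟨t, ht⟩ : ∃ t : ℝ, t = max 0 ((r + 1) / δ) + 1 := ⟨_, rfl⟩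
    have ht0 : 0 ≤ t := by rw [ht]; positivity
    have htδ : r + 1 < t * δ := by
      have h1 : (r + 1) / δ ≤ max 0 ((r + 1) / δ) := le_max_right _ _
      have h2 : (r + 1) / δ * δ = r + 1 := div_mul_cancel₀ _ (ne_of_gt hδpos)
      have h3 : (r + 1) / δ * δ ≤ (0 ⊔ ((r + 1) / δ)) * δ :=
        mul_le_mul_of_nonneg_right h1 hδpos.le
      have h4 : t * δ = (0 ⊔ ((r + 1) / δ)) * δ + δ := by rw [ht]; ring
      linarith
    have hmem : (r + 1) ∈ {α : ℝ | ∃ (m : ℕ) (X : Fin m → (Ω → ℝ)) (s : Fin m → ℝ),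
        (∀ i, X i ∈ D) ∧ (∀ i, 0 ≤ s i) ∧
        (⨆ ω, (∑ i, s i * (X i ω - P (X i)) - ((fun _ => (0:ℝ)) ω - α))) < 0} := by
      refine ⟨n, X, fun i => t * s i, hX, fun i => mul_nonneg ht0 (hs i), ?_⟩
      have hle : ∀ ω, (∑ i, (t * s i) * (X i ω - P (X i)) - ((0:ℝ) - (r + 1)))
          ≤ t * (-δ) + (r + 1) := by
        intro ω
        have h1 : ∑ i, s i * (X i ω - P (X i)) ≤ -δ := by
          have := le_ciSup hBA ω
          simpa [hδ] using this
        have h2 : ∑ i, (t * s i) * (X i ω - P (X i))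
            = t * ∑ i, s i * (X i ω - P (X i)) := by
          rw [Finset.mul_sum]; apply Finset.sum_congr rfl; intros; ring
        have h3 : t * ∑ i, s i * (X i ω - P (X i)) ≤ t * (-δ) :=
          mul_le_mul_of_nonneg_left h1 ht0
        rw [h2]; linarith
      calc (⨆ ω, (∑ i, (t * s i) * (X i ω - P (X i)) - ((fun _ => (0:ℝ)) ω - (r + 1))))
          ≤ t * (-δ) + (r + 1) := ciSup_le (fun ω => hle ω)
        _ < 0 := by nlinarith
    have hle2 : ((r + 1 : ℝ) : EReal) ≤ (r : EReal) := by
      rw [← hr]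
      exact le_sSup (Set.mem_image_of_mem _ hmem)
    rw [EReal.coe_le_coe_iff] at hle2
    linarith
  · intro hASL Z hZa hZb
    set S : Set ℝ := {α : ℝ | ∃ (m : ℕ) (X : Fin m → (Ω → ℝ)) (s : Fin m → ℝ),
        (∀ i, X i ∈ D) ∧ (∀ i, 0 ≤ s i) ∧
        (⨆ ω, (∑ i, s i * (X i ω - P (X i)) - (Z ω - α))) < 0} with hS
    obtain ⟨L, hL⟩ := hZb
    obtain ⟨M, hM⟩ := hZa
    have hSne : S.Nonempty := by
      refine ⟨L - 1, ⟨0, Fin.elim0, Fin.elim0, fun i => i.elim0, fun i => i.elim0, ?_⟩⟩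
      have : ∀ ω, (∑ i : Fin 0, Fin.elim0 i * ((Fin.elim0 i : Ω → ℝ) ω - P (Fin.elim0 i))
          - (Z ω - (L - 1))) ≤ -1 := by
        intro ω
        have : L ≤ Z ω := hL (Set.mem_range_self ω)
        simp only [Finset.univ_eq_empty, Finset.sum_empty]
        linarith
      calc (⨆ ω, (∑ i : Fin 0, Fin.elim0 i * ((Fin.elim0 i : Ω → ℝ) ω - P (Fin.elim0 i))
            - (Z ω - (L - 1)))) ≤ -1 := ciSup_le this
        _ < 0 := by norm_num
    have hSbdd : BddAbove S := by
      refine ⟨M, ?_⟩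
      rintro α ⟨m, X, s, hX, hs, hsup⟩
      obtain ⟨B, hB⟩ := bdd_sum_aux X s hs (fun i => (hbdd (X i) (hX i)).1) (fun i => P (X i))
      have hBA2 : BddAbove (Set.range (fun ω => ∑ i, s i * (X i ω - P (X i)) - (Z ω - α))) := by
        refine ⟨B - L + α, ?_⟩
        rintro _ ⟨ω, rfl⟩
        have h1 : ∑ i, s i * (X i ω - P (X i)) ≤ B := hB (Set.mem_range_self ω)
        have h2 : L ≤ Z ω := hL (Set.mem_range_self ω)
        simp only
        linarith
      have key : ∀ ω, ∑ i, s i * (X i ω - P (X i)) ≤ M - α := by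
        intro ω
        have h1 : (∑ i, s i * (X i ω - P (X i)) - (Z ω - α)) ≤ ⨆ ω, (∑ i, s i * (X i ω - P (X i)) - (Z ω - α)) :=
          le_ciSup hBA2 ω
        have h2 : Z ω ≤ M := hM (Set.mem_range_self ω)
        linarith [lt_of_le_of_lt h1 hsup]
      have h3 : (⨆ ω, ∑ i, s i * (X i ω - P (X i))) ≤ M - α := ciSup_le key
      have h4 := hASL m X hX s hs
      linarith
    refine ⟨sSup S, ?_⟩
    exact (Monotone.map_csSup_of_continuousAt (continuous_coe_real_ereal.continuousAt)
      EReal.coe_strictMono.monotone hSne hSbdd).symm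
end

section
/- Let P be an unconditional lower prevision on D. The 2-coherent natural extension E_2(Z) is finite for all gambles Z if and only if P 1-avoids sure loss, i.e., P(X) ≤ sup X for every X ∈ D. -/
lemma ereal_sSup_image {S : Set ℝ} (hne : S.Nonempty) (hbd : BddAbove S) :
    sSup ((fun x : ℝ => (x : EReal)) '' S) = ((sSup S : ℝ) : EReal) := by
  apply le_antisymm
  · apply sSup_le
    rintro x ⟨a, ha, rfl⟩
    exact EReal.coe_le_coe_iff.mpr (le_csSup hbd ha)
  · rw [le_sSup_iff]
    rintro b hb
    induction b with
    | bot =>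
      obtain ⟨a, ha⟩ := hne
      exact absurd (hb ⟨a, ha, rfl⟩) (by simp)
    | coe b =>
      refine EReal.coe_le_coe_iff.mpr (csSup_le hne fun a ha => ?_)
      exact EReal.coe_le_coe_iff.mp (hb ⟨a, ha, rfl⟩)
    | top => exact le_top

lemma pointwise_of_ciSup_neg {Ω : Type*} [Nonempty Ω] {f : Ω → ℝ}
    (h : (⨆ ω, f ω) < 0) : ∀ ω, f ω < 0 := by
  intro ω
  by_cases hb : BddAbove (Set.range f)
  · exact lt_of_le_of_lt (le_ciSup hb ω) h
  · rw [Real.iSup_of_not_bddAbove hb] at h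
    exact absurd h (lt_irrefl 0)

/-- the 2-coherent natural extension `E_2(Z)` is finite for all gambles `Z`
iff `P` 1-avoids sure loss, i.e. `P X ≤ sup X` for every `X ∈ D`. -/
theorem twoCoherentNatExt_finite_iff_oneASL
    {Ω : Type*} [Nonempty Ω] (D : Set (Ω → ℝ)) (hD : D.Nonempty) (P : (Ω → ℝ) → ℝ)
    (hbdd : ∀ X ∈ D, BddAbove (Set.range X) ∧ BddBelow (Set.range X)) :
    (∀ Z : Ω → ℝ, BddAbove (Set.range Z) → BddBelow (Set.range Z) →
      ∃ r : ℝ,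
        sSup ((fun x : ℝ => (x : EReal)) ''
          {α : ℝ | ∃ X ∈ D, ∃ s : ℝ, 0 ≤ s ∧
            (⨆ ω, (s * (X ω - P X) - (Z ω - α))) < 0}) = (r : EReal)) ↔
    (∀ X ∈ D, P X ≤ ⨆ ω, X ω) := by
  constructor
  · -- finiteness → 1-ASL
    intro hfin X hX
    by_contra hlt
    push_neg at hlt
    set δ : ℝ := P X - (⨆ ω, X ω) with hδ
    have hδpos : 0 < δ := sub_pos.mpr hlt
    -- take Z = 0 : the set is all of ℝ
    obtain ⟨r, hr⟩ := hfin (fun _ => 0)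
      ⟨0, by rintro x ⟨ω, rfl⟩; simp⟩
      ⟨0, by rintro x ⟨ω, rfl⟩; simp⟩
    -- every α is in the set
    have hmem : ∀ α : ℝ, α ∈ {α : ℝ | ∃ X ∈ D, ∃ s : ℝ, 0 ≤ s ∧
        (⨆ ω, (s * (X ω - P X) - ((fun _ => (0:ℝ)) ω - α))) < 0} := by
      intro α
      refine ⟨X, hX, max 0 ((α + 1) / δ), le_max_left _ _, ?_⟩
      set s : ℝ := max 0 ((α + 1) / δ) with hs
      have hs0 : 0 ≤ s := le_max_left _ _
      have key : α - s * δ < 0 := by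
        rcases le_or_gt ((α + 1) / δ) 0 with h | h
        · have hα : α + 1 ≤ 0 := by
            by_contra hc
            push_neg at hc
            exact absurd (div_pos hc hδpos) (not_lt.mpr h)
          have : s * δ ≥ 0 := mul_nonneg hs0 hδpos.le
          linarith
        · have : s = (α + 1) / δ := max_eq_right h.le
          rw [this, div_mul_cancel₀ _ hδpos.ne']
          linarith
      refine lt_of_le_of_lt (ciSup_le fun ω => ?_) key
      have hXω : X ω ≤ ⨆ ω, X ω := le_ciSup (hbdd X hX).1 ω
      have : s * (X ω - P X) ≤ s * (-δ) := by
        apply mul_le_mul_of_nonneg_left _ hs0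
        rw [hδ]; linarith
      show s * (X ω - P X) - ((0:ℝ) - α) ≤ α - s * δ
      linarith
    have : (r + 1 : ℝ) ≤ r := by
      have h1 : ((r + 1 : ℝ) : EReal) ≤ (r : EReal) := by
        rw [← hr]
        exact le_sSup ⟨r + 1, hmem (r + 1), rfl⟩
      exact_mod_cast h1
    linarith
  · -- 1-ASL → finiteness
    intro hASL Z hZa hZb
    set A : Set ℝ := {α : ℝ | ∃ X ∈ D, ∃ s : ℝ, 0 ≤ s ∧
        (⨆ ω, (s * (X ω - P X) - (Z ω - α))) < 0} with hA
    -- A is nonempty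
    obtain ⟨X₀, hX₀⟩ := hD
    have hZlb : ∀ ω, sInf (Set.range Z) ≤ Z ω := fun ω => csInf_le hZb ⟨ω, rfl⟩
    have hne : A.Nonempty := by
      refine ⟨sInf (Set.range Z) - 1, X₀, hX₀, 0, le_refl 0, ?_⟩
      refine lt_of_le_of_lt (ciSup_le fun ω => ?_) (show (-1:ℝ) < 0 by norm_num)
      have := hZlb ω
      simp only [zero_mul, zero_sub]
      linarith
    -- A is bounded above by sSup (range Z) + 1
    have hbdA : BddAbove A := by
      refine ⟨sSup (Set.range Z) + 1, fun α hα => ?_⟩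
      obtain ⟨X, hX, s, hs0, hsup⟩ := hα
      have hpt := pointwise_of_ciSup_neg hsup
      -- find ω with s * (P X - X ω) < 1
      have hPX : P X ≤ ⨆ ω, X ω := hASL X hX
      have hε : 0 < 1 / (s + 1) := by positivity
      obtain ⟨ω, hω⟩ : ∃ ω, (⨆ ω, X ω) - 1 / (s + 1) < X ω := by
        by_contra hc
        push_neg at hc
        have : (⨆ ω, X ω) ≤ (⨆ ω, X ω) - 1 / (s + 1) := ciSup_le hc
        linarith
      have h1 : s * (P X - X ω) < 1 := by
        have h2 : P X - X ω < 1 / (s + 1) := by linarith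
        calc s * (P X - X ω) ≤ s * (1 / (s + 1)) := by
              rcases eq_or_lt_of_le hs0 with h | h
              · simp [← h]
              · exact le_of_lt (by
                  rcases lt_or_ge (P X - X ω) 0 with h3 | h3
                  · exact lt_of_lt_of_le (mul_neg_of_pos_of_neg h h3) (by positivity)
                  · exact mul_lt_mul_of_pos_left h2 h)
          _ < 1 := by
              rw [mul_one_div, div_lt_one (by linarith)]
              linarith
      have := hpt ω
      have hZω : Z ω ≤ sSup (Set.range Z) := le_csSup hZa ⟨ω, rfl⟩
      nlinarith
    exact ⟨sSup A, ereal_sSup_image hne hbdA⟩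
end

section
/- Let 𝒫 be a partition, P a 2-coherent lower probability on A(𝒫), and Z a gamble on 𝒫. Then the Choquet integral extension dominates the 2-coherent natural extension: (C)∫ Z dP ≥ E_2(Z), where E_2(Z) = max{inf Z, sup{inf(Z|E)P(E) + inf(Z|Eᶜ)(1 - P(E)) : E ∈ A(𝒫)\{∅,Ω\}, inf(Z|E) > inf(Z|Eᶜ)}}. -/
open MeasureTheory

/-- The Choquet integral of a bounded gamble `Z` with respect to a capacity `μ`:
`inf Z + ∫_{inf Z}^{sup Z} μ(Z ≥ x) dx`. -/
noncomputable def choquet {Ω : Type*} (μ : Set Ω → ℝ) (Z : Ω → ℝ) : ℝ :=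
  sInf (Set.range Z) +
    ∫ x in (sInf (Set.range Z))..(sSup (Set.range Z)), μ {ω | x ≤ Z ω}

/-- for a 2-coherent lower probability `P` on the powerset algebra of a
partition (atoms identified with points of `Ω`), the Choquet integral extension dominates
the 2-coherent natural extension `E_2(Z)`, given by its explicit formula (extended-real
valued; the supremum over an empty set is `⊥`). -/
theorem choquet_ge_twoCoherentNatExt
    {Ω : Type*} [Nonempty Ω] (P : Set Ω → ℝ) (Z : Ω → ℝ)
    (hZa : BddAbove (Set.range Z)) (hZb : BddBelow (Set.range Z))
    (h2coh : ∀ E₀ E₁ : Set Ω, ∀ s₀ s₁ : ℝ, 0 ≤ s₀ → 0 ≤ s₁ →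
      0 ≤ ⨆ ω, (s₁ * (Set.indicator E₁ (fun _ => (1 : ℝ)) ω - P E₁) -
                s₀ * (Set.indicator E₀ (fun _ => (1 : ℝ)) ω - P E₀))) :
    max ((sInf (Set.range Z) : ℝ) : EReal)
        (sSup ((fun x : ℝ => (x : EReal)) ''
          {v : ℝ | ∃ E : Set Ω, E ≠ ∅ ∧ E ≠ Set.univ ∧
            sInf (Z '' Eᶜ) < sInf (Z '' E) ∧
            v = sInf (Z '' E) * P E + sInf (Z '' Eᶜ) * (1 - P E)}))
      ≤ ((choquet P Z : ℝ) : EReal) := by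
  -- indicator bounds
  have hind0 : ∀ (E : Set Ω) (ω : Ω), (0:ℝ) ≤ Set.indicator E (fun _ => (1:ℝ)) ω := by
    intro E ω; by_cases h : ω ∈ E <;> simp [h]
  have hind1 : ∀ (E : Set Ω) (ω : Ω), Set.indicator E (fun _ => (1:ℝ)) ω ≤ 1 := by
    intro E ω; by_cases h : ω ∈ E <;> simp [h]
  -- P is nonnegative
  have hP0 : ∀ E : Set Ω, 0 ≤ P E := by
    intro E
    have h := h2coh E ∅ 1 0 zero_le_one le_rfl
    refine le_trans h (ciSup_le fun ω => ?_)
    have := hind0 E ω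
    simp only [zero_mul, one_mul]
    linarith
  -- P is bounded by 1
  have hP1 : ∀ E : Set Ω, P E ≤ 1 := by
    intro E
    have h := h2coh ∅ E 0 1 le_rfl zero_le_one
    have h' : (⨆ ω, (1 * (Set.indicator E (fun _ => (1:ℝ)) ω - P E) -
        0 * (Set.indicator ∅ (fun _ => (1:ℝ)) ω - P ∅))) ≤ 1 - P E := by
      refine ciSup_le fun ω => ?_
      have := hind1 E ω
      simp only [zero_mul, one_mul]
      linarith
    linarith [le_trans h h']
  -- monotonicity
  have hMono : ∀ E F : Set Ω, E ⊆ F → P E ≤ P F := by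
    intro E F hEF
    have h := h2coh F E 1 1 zero_le_one zero_le_one
    have h' : (⨆ ω, (1 * (Set.indicator E (fun _ => (1:ℝ)) ω - P E) -
        1 * (Set.indicator F (fun _ => (1:ℝ)) ω - P F))) ≤ P F - P E := by
      refine ciSup_le fun ω => ?_
      have hle : Set.indicator E (fun _ => (1:ℝ)) ω ≤ Set.indicator F (fun _ => (1:ℝ)) ω := by
        by_cases hE : ω ∈ E
        · simp [hE, hEF hE]
        · simpa [hE] using hind0 F ω
      simp only [one_mul]
      linarith
    linarith [le_trans h h']
  set m := sInf (Set.range Z) with hm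
  set M := sSup (Set.range Z) with hM
  set f : ℝ → ℝ := fun x => P {ω | x ≤ Z ω} with hf
  have hfanti : Antitone f := by
    intro x y hxy
    exact hMono _ _ (fun ω hω => le_trans hxy hω)
  have hfint : ∀ a b : ℝ, IntervalIntegrable f volume a b := fun a b =>
    (hfanti.antitoneOn _).intervalIntegrable
  have hne : (Set.range Z).Nonempty := Set.range_nonempty Z
  have hmM : m ≤ M := by
    obtain ⟨y, hy⟩ := hne
    exact le_trans (csInf_le hZb hy) (le_csSup hZa hy)
  have hfnn : ∀ x, 0 ≤ f x := fun x => hP0 _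
  refine max_le ?_ ?_
  · -- choquet ≥ inf Z
    rw [EReal.coe_le_coe_iff]
    have : 0 ≤ ∫ x in m..M, f x :=
      intervalIntegral.integral_nonneg hmM (fun x _ => hfnn x)
    unfold choquet
    rw [← hm, ← hM]
    linarith
  · refine sSup_le ?_
    rintro x ⟨v, ⟨E, hE1, hE2, hlt, hv⟩, rfl⟩
    rw [EReal.coe_le_coe_iff]
    have hEne : E.Nonempty := Set.nonempty_iff_ne_empty.mpr hE1
    have hEcne : Eᶜ.Nonempty := by
      rw [Set.nonempty_compl]; exact hE2
    set a := sInf (Z '' Eᶜ) with ha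
    set b := sInf (Z '' E) with hb
    have hbdE : BddBelow (Z '' E) := hZb.mono (Set.image_subset_range Z E)
    have hbdEc : BddBelow (Z '' Eᶜ) := hZb.mono (Set.image_subset_range Z Eᶜ)
    -- a = m
    have hma : m = a := by
      apply le_antisymm
      · exact csInf_le_csInf hZb (hEcne.image Z) (Set.image_subset_range Z Eᶜ)
      · apply le_csInf hne
        rintro y ⟨ω, rfl⟩
        by_cases hω : ω ∈ E
        · exact le_trans hlt.le (csInf_le hbdE ⟨ω, hω, rfl⟩)
        · exact csInf_le hbdEc ⟨ω, hω, rfl⟩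
    have hbM : b ≤ M := by
      obtain ⟨ω, hω⟩ := hEne
      exact le_trans (csInf_le hbdE ⟨ω, hω, rfl⟩) (le_csSup hZa ⟨ω, rfl⟩)
    have hab : a ≤ b := hlt.le
    -- split the integral
    have hsplit : (∫ x in a..b, f x) + (∫ x in b..M, f x) = ∫ x in a..M, f x :=
      intervalIntegral.integral_add_adjacent_intervals (hfint a b) (hfint b M)
    have h1 : (b - a) * P E ≤ ∫ x in a..b, f x := by
      have hc : ∫ x in a..b, (P E) = (b - a) * P E := by
        rw [intervalIntegral.integral_const, smul_eq_mul]
      rw [← hc]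
      refine intervalIntegral.integral_mono_on hab
        (intervalIntegrable_const) (hfint a b) ?_
      intro x hx
      refine hMono _ _ ?_
      intro ω hω
      exact le_trans hx.2 (csInf_le hbdE ⟨ω, hω, rfl⟩)
    have h2 : 0 ≤ ∫ x in b..M, f x :=
      intervalIntegral.integral_nonneg hbM (fun x _ => hfnn x)
    unfold choquet
    rw [← hm, ← hM, hma, hv, ← hsplit]
    nlinarith [hP0 E, hP1 E]
end
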